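/- Positive invariance of the state space: for the coupled epidemic–opinion system ẋ_i = −[δ_min + (δ_i − δ_min)(o_i + 0.5)] x_i + (1 − x_i) Σ_{j∈N_i} [β_ij − (β_ij − β_min)(o_i + 0.5)] x_j and ȯ_i = (x_i − (o_i + 0.5)) + Σ_{j∈N̄_i} |ā_ij(o)| (sign(ā_ij(o)) o_j − o_i), if at some time t one has x_i(t) ∈ [0,1] and o_i(t) ∈ [−0.5, 0.5] for all i ∈ [n], then x_i(t+τ) ∈ [0,1] and o_i(t+τ) ∈ [−0.5, 0.5] for all i ∈ [n] and all τ ≥ 0. -/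

import Mathlib

open Matrix Filter Set

noncomputable section

/-- The modified sign function: `1` if `0 ≤ x`, `-1` otherwise. -/
def sgnm (x : ℝ) : ℝ := if 0 ≤ x then 1 else -1

/-- Gauge transformation matrix `Φ(o) = diag(sgnm o₁, …, sgnm oₙ)`. -/
def gaugeMat {n : ℕ} (o : Fin n → ℝ) : Matrix (Fin n) (Fin n) ℝ :=
  Matrix.diagonal fun i => sgnm (o i)

/-- Graph Laplacian of a nonnegative adjacency matrix with zero diagonal. -/
def lapOf {n : ℕ} (A : Matrix (Fin n) (Fin n) ℝ) : Matrix (Fin n) (Fin n) ℝ :=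
  Matrix.diagonal (fun i => ∑ j, A i j) - A

/-- Irreducibility of a (nonnegative) matrix: between any two indices some power
has a strictly positive entry. -/
def MatIrreducible {n : ℕ} (M : Matrix (Fin n) (Fin n) ℝ) : Prop :=
  ∀ i j : Fin n, ∃ k : ℕ, 1 ≤ k ∧ 0 < (M ^ k) i j

/-- Spectral radius of a real square matrix, as the largest modulus of a complex
eigenvalue. -/
def specRad {m : Type*} [Fintype m] [DecidableEq m] (A : Matrix m m ℝ) : ℝ :=
  sSup ((fun z : ℂ => ‖z‖) '' spectrum ℂ (A.map (algebraMap ℝ ℂ)))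

/-- Spectral abscissa of a real square matrix, as the largest real part of a
complex eigenvalue. -/
def specAbs {m : Type*} [Fintype m] [DecidableEq m] (A : Matrix m m ℝ) : ℝ :=
  sSup (Complex.re '' spectrum ℂ (A.map (algebraMap ℝ ℂ)))

/-- A real square matrix is Hurwitz if all its (complex) eigenvalues have
negative real part. -/
def IsHurwitz {m : Type*} [Fintype m] [DecidableEq m] (A : Matrix m m ℝ) : Prop :=
  ∀ z ∈ spectrum ℂ (A.map (algebraMap ℝ ℂ)), z.re < 0

/-- The data of the coupled networked SIS epidemic–opinion model over `n`
communities. -/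
structure EpiOpModel (n : ℕ) where
  /-- healing rates -/
  δ : Fin n → ℝ
  /-- minimum healing rate -/
  δmin : ℝ
  /-- minimum infection rate -/
  βmin : ℝ
  /-- unweighted adjacency matrix `Ã` of the (strongly connected) epidemic graph -/
  Atil : Matrix (Fin n) (Fin n) ℝ
  /-- infection matrix `B = [β_ij]` -/
  B : Matrix (Fin n) (Fin n) ℝ
  /-- nonnegative adjacency matrix `Ā_u` of the (strongly connected) opinion graph -/
  Au : Matrix (Fin n) (Fin n) ℝ
  δmin_pos : 0 < δmin
  δ_ge : ∀ i, δmin ≤ δ i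
  βmin_pos : 0 < βmin
  Atil_01 : ∀ i j, Atil i j = 0 ∨ Atil i j = 1
  Atil_diag : ∀ i, Atil i i = 0
  B_edge : ∀ i j, Atil i j = 1 → βmin ≤ B i j
  B_off : ∀ i j, Atil i j = 0 → B i j = 0
  B_irred : MatIrreducible B
  Au_nonneg : ∀ i j, 0 ≤ Au i j
  Au_diag : ∀ i, Au i i = 0
  Au_irred : MatIrreducible Au

namespace EpiOpModel

/-- The state space `[0,1]^n × [−0.5, 0.5]^n`. -/
def InBox {n : ℕ} (_M : EpiOpModel n) (x o : Fin n → ℝ) : Prop :=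
  (∀ i, x i ∈ Set.Icc (0:ℝ) 1) ∧ (∀ i, o i ∈ Set.Icc (-(1/2) : ℝ) (1/2))

variable {n : ℕ} (M : EpiOpModel n)

/-- `B_min = β_min Ã`. -/
def Bmin : Matrix (Fin n) (Fin n) ℝ := M.βmin • M.Atil

/-- `D = diag(δ₁, …, δₙ)`. -/
def Dmax : Matrix (Fin n) (Fin n) ℝ := Matrix.diagonal M.δ

/-- `D_min = δ_min I`. -/
def Dmin : Matrix (Fin n) (Fin n) ℝ := M.δmin • (1 : Matrix (Fin n) (Fin n) ℝ)

/-- Opinion-dependent healing matrix `D(o) = D_min + (D − D_min)(O + 0.5 I)`. -/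
def Dmat (o : Fin n → ℝ) : Matrix (Fin n) (Fin n) ℝ :=
  Matrix.diagonal fun i => M.δmin + (M.δ i - M.δmin) * (o i + 1/2)

/-- Opinion-dependent infection matrix `B(o) = B − (O + 0.5 I)(B − B_min)`. -/
def Bmat (o : Fin n → ℝ) : Matrix (Fin n) (Fin n) ℝ :=
  Matrix.of fun i j => M.B i j - (o i + 1/2) * (M.B i j - M.Bmin i j)

/-- Laplacian `L̄_u` of the opinion adjacency matrix. -/
def Lu : Matrix (Fin n) (Fin n) ℝ := lapOf M.Au

/-- Signed opinion Laplacian `Φ(o) L̄_u Φ(o)`. -/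
def Lsgn (o : Fin n → ℝ) : Matrix (Fin n) (Fin n) ℝ :=
  gaugeMat o * M.Lu * gaugeMat o

/-- Epidemic vector field `ẋ = −D(o)x + (I − X)B(o)x`. -/
def fx (x o : Fin n → ℝ) : Fin n → ℝ :=
  -(M.Dmat o).mulVec x +
    (Matrix.diagonal fun i => 1 - x i).mulVec ((M.Bmat o).mulVec x)

/-- Opinion vector field `ȯ = x − (Φ(o) L̄_u Φ(o) + I) o − 0.5 e`. -/
def fo (x o : Fin n → ℝ) : Fin n → ℝ :=
  x - (M.Lsgn o + 1).mulVec o - (fun _ => (1/2 : ℝ))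

/-- Equilibria of the coupled system. -/
def IsEquilibrium (x o : Fin n → ℝ) : Prop := M.fx x o = 0 ∧ M.fo x o = 0

/-- Trajectories (solutions) of the coupled system. -/
def IsTrajectory (x o : ℝ → Fin n → ℝ) : Prop :=
  ∀ t : ℝ, ∀ i : Fin n,
    HasDerivAt (fun s => x s i) (M.fx (x t) (o t) i) t ∧
    HasDerivAt (fun s => o s i) (M.fo (x t) (o t) i) t

/-- The Opinion-Dependent Reproduction Number `R^o = ρ(D(o)⁻¹ B(o))`. -/
def Rnum (o : Fin n → ℝ) : ℝ := specRad ((M.Dmat o)⁻¹ * M.Bmat o)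

/-- `R_max = ρ(D_min⁻¹ B)`. -/
def Rmax : ℝ := specRad (M.Dmin⁻¹ * M.B)

/-- `R_min = ρ(D⁻¹ B_min)`. -/
def Rmin : ℝ := specRad (M.Dmax⁻¹ * M.Bmin)

/-- `W(o) = −D(o) + B(o)`. -/
def Wmat (o : Fin n → ℝ) : Matrix (Fin n) (Fin n) ℝ := -(M.Dmat o) + M.Bmat o

/-- Jacobian matrix of the coupled system evaluated at a healthy equilibrium
`(0, o)`: block lower triangular with diagonal blocks `W(o)` and
`−(Φ(o) L̄_u Φ(o) + I)`. -/
def JacHealthy (o : Fin n → ℝ) : Matrix (Fin n ⊕ Fin n) (Fin n ⊕ Fin n) ℝ :=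
  Matrix.fromBlocks (M.Wmat o) 0 1 (-(M.Lsgn o + 1))

/-- Lyapunov stability of an equilibrium of the coupled system. -/
def LyapunovStable (xe oe : Fin n → ℝ) : Prop :=
  ∀ ε > 0, ∃ δ > 0, ∀ x o : ℝ → Fin n → ℝ, M.IsTrajectory x o →
    dist (x 0, o 0) (xe, oe) < δ → ∀ t ≥ 0, dist (x t, o t) (xe, oe) < ε

/-- Local exponential stability of an equilibrium of the coupled system. -/
def LocExpStable (xe oe : Fin n → ℝ) : Prop :=
  ∃ δ > 0, ∃ C > 0, ∃ α > 0, ∀ x o : ℝ → Fin n → ℝ, M.IsTrajectory x o →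
    dist (x 0, o 0) (xe, oe) < δ →
    ∀ t ≥ 0, dist (x t, o t) (xe, oe) ≤
      C * Real.exp (-α * t) * dist (x 0, o 0) (xe, oe)

end EpiOpModel

/-!
The state space `K = [0,1]ⁿ × [-½,½]ⁿ` is a closed box on whose boundary the vector field points
into `K`: at `x_i = 0` only the nonnegative infection term remains and at `x_i = 1` only healing;
at `o_i = -½` the opinion drift is `x_i + ∑ⱼ [Ā_u]_ij (½ - |o_j|) ≥ 0` and at `o_i = ½` it is
`x_i - 1 - ∑ⱼ [Ā_u]_ij (½ - |o_j|) ≤ 0`. Let `u(s)` be the sup-norm distance from the trajectory to `K`.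
The coordinatewise clamp is a nearest point of `K` which keeps the signs of the opinions, and
once the sign pattern is frozen the field is polynomial, hence Lipschitz on bounded sets.
Comparing the trajectory with a short step from the clamped point along the field gives
`D⁺u ≤ L u`, so `u(t) = 0` forces `u ≡ 0` by Grönwall.
-/

open Topology Metric

theorem IsClosed.mem_of_hasDerivWithinAt_of_tangent {E : Type*} [NormedAddCommGroup E]
    [NormedSpace ℝ E] {K : Set E} (hK : IsClosed K) {f : E → E} {y : ℝ → E} {a b L : ℝ}
    (hy : ContinuousOn y (Icc a b))
    (hy' : ∀ s ∈ Ico a b, HasDerivWithinAt y (f (y s)) (Ici s) s)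
    (htan : ∀ p ∈ K, ∀ᶠ h in 𝓝[>] (0 : ℝ), p + h • f p ∈ K)
    (hnear : ∀ s ∈ Ico a b, ∃ p ∈ K, (∀ q ∈ K, dist (y s) p ≤ dist (y s) q) ∧
      ‖f (y s) - f p‖ ≤ L * dist (y s) p)
    (ha : y a ∈ K) :
    ∀ s ∈ Icc a b, y s ∈ K := by
  have hne : K.Nonempty := ⟨_, ha⟩
  set u : ℝ → ℝ := fun s => infDist (y s) K
  suffices hu : ∀ s ∈ Icc a b, u s ≤ gronwallBound 0 L 0 (s - a) by
    intro s hs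
    rw [← hK.closure_eq, mem_closure_iff_infDist_zero hne]
    exact le_antisymm ((hu s hs).trans_eq (gronwallBound_ε0_δ0 _ _)) infDist_nonneg
  refine le_gronwallBound_of_liminf_deriv_right_le (f' := fun s => L * u s)
    ((continuous_infDist_pt K).comp_continuousOn hy) ?_ (infDist_zero_of_mem ha).le
    (fun s _ => by simp)
  intro s hs r hr
  obtain ⟨p, hpK, hpnear, hLip⟩ := hnear s hs
  have hus : u s = dist (y s) p :=
    le_antisymm (infDist_le_dist_of_mem hpK) ((le_infDist hne).2 hpnear)
  set ε := r - L * u s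
  have hε0 : 0 < ε := sub_pos.2 hr
  have hderiv : ∀ᶠ z in 𝓝[>] s, ‖y z - y s - (z - s) • f (y s)‖ ≤ ε / 2 * (z - s) := by
    have := ((hasDerivWithinAt_iff_isLittleO.1 (hy' s hs)).bound (half_pos hε0)).filter_mono
      (nhdsWithin_mono _ Ioi_subset_Ici_self)
    filter_upwards [this, self_mem_nhdsWithin] with z hz hsz
    rwa [Real.norm_of_nonneg (sub_nonneg.2 (le_of_lt hsz))] at hz
  have hshift : Tendsto (fun z => z - s) (𝓝[>] s) (𝓝[>] 0) :=
    tendsto_nhdsWithin_iff.2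
      ⟨by simpa using ((continuous_sub_right s).tendsto s).mono_left nhdsWithin_le_nhds,
        eventually_nhdsWithin_of_forall fun z (hz : s < z) => sub_pos.2 hz⟩
  refine (hderiv.and ((hshift.eventually (htan p hpK)).and self_mem_nhdsWithin)).frequently.mono
    ?_
  rintro z ⟨hz, hzK, hsz : s < z⟩
  have hh : 0 < z - s := sub_pos.2 hsz
  have hstep : u z ≤ u s + (z - s) * (L * u s) + ε / 2 * (z - s) := calc
    u z ≤ dist (y z) (p + (z - s) • f p) := infDist_le_dist_of_mem hzK
    _ = ‖(y z - y s - (z - s) • f (y s)) + (y s - p) + (z - s) • (f (y s) - f p)‖ := by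
      rw [dist_eq_norm, smul_sub]; congr 1; abel
    _ ≤ ε / 2 * (z - s) + u s + (z - s) * (L * u s) := by
      refine (norm_add₃_le ..).trans (add_le_add_three hz (by rw [hus, dist_eq_norm]) ?_)
      rw [norm_smul, Real.norm_of_nonneg hh.le, hus]
      exact mul_le_mul_of_nonneg_left hLip hh.le
    _ = _ := by ring
  rw [inv_mul_lt_iff₀ hh]
  calc u z - u s ≤ (z - s) * (L * u s + ε / 2) := by linarith
    _ < (z - s) * r := mul_lt_mul_of_pos_left (by linarith) hh

theorem eventually_add_mul_mem_Icc {a b p g : ℝ} (hp : p ∈ Icc a b) (hlo : p = a → 0 ≤ g)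
    (hhi : p = b → g ≤ 0) : ∀ᶠ h in 𝓝[>] (0 : ℝ), p + h * g ∈ Icc a b := by
  have hlim : Tendsto (fun h => p + h * g) (𝓝[>] 0) (𝓝 p) :=
    ((by fun_prop : Continuous fun h => p + h * g).tendsto' 0 p (by simp)).mono_left
      nhdsWithin_le_nhds
  have hpos : ∀ᶠ h in 𝓝[>] (0 : ℝ), 0 < h := self_mem_nhdsWithin
  refine Eventually.and ?_ ?_
  · rcases hp.1.eq_or_lt with rfl | hap
    · filter_upwards [hpos] with h hh using le_add_of_nonneg_right (mul_nonneg hh.le (hlo rfl))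
    · exact (hlim.eventually_const_lt hap).mono fun _ => le_of_lt
  · rcases hp.2.eq_or_lt with rfl | hpb
    · filter_upwards [hpos] with h hh using
        add_le_of_nonpos_right (mul_nonpos_of_nonneg_of_nonpos hh.le (hhi rfl))
    · exact (hlim.eventually_lt_const hpb).mono fun _ => le_of_lt

theorem eventually_add_smul_mem_Icc {ι : Type*} [Finite ι] {a b p g : ι → ℝ} (hp : p ∈ Icc a b)
    (hlo : ∀ i, p i = a i → 0 ≤ g i) (hhi : ∀ i, p i = b i → g i ≤ 0) :
    ∀ᶠ h in 𝓝[>] (0 : ℝ), p + h • g ∈ Icc a b := by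
  simp only [mem_Icc, Pi.le_def, ← forall_and]
  exact eventually_all.2 fun i =>
    eventually_add_mul_mem_Icc ⟨hp.1 i, hp.2 i⟩ (hlo i) (hhi i)

theorem max_min_mem_Icc {α : Type*} [Lattice α] {a b : α} (hab : a ≤ b) (y : α) :
    max a (min b y) ∈ Icc a b :=
  ⟨le_sup_left, sup_le hab inf_le_left⟩

theorem abs_sub_max_min_le {a b q : ℝ} (hq : q ∈ Icc a b) (y : ℝ) :
    |y - max a (min b y)| ≤ |y - q| := by
  rcases le_total y a with hya | hay
  · rw [min_eq_right (hya.trans (hq.1.trans hq.2)), max_eq_left hya, abs_of_nonpos (by linarith),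
      abs_of_nonpos (by linarith [hq.1])]
    linarith [hq.1]
  rcases le_total y b with hyb | hby
  · simp [min_eq_right hyb, max_eq_right hay]
  · rw [min_eq_left hby, max_eq_right (hq.1.trans hq.2), abs_of_nonneg (by linarith),
      abs_of_nonneg (by linarith [hq.2])]
    linarith [hq.2]

theorem dist_max_min_le {ι : Type*} [Fintype ι] {a b q : ι → ℝ} (hq : q ∈ Icc a b) (y : ι → ℝ) :
    dist y (max a (min b y)) ≤ dist y q :=
  (dist_pi_le_iff dist_nonneg).2 fun i => (abs_sub_max_min_le ⟨hq.1 i, hq.2 i⟩ (y i)).trans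
    (dist_le_pi_dist y q i)

theorem sgnm_cases (y : ℝ) : sgnm y = 1 ∨ sgnm y = -1 := by
  unfold sgnm; split_ifs <;> simp

theorem sgnm_mul_eq_abs (y : ℝ) : sgnm y * y = |y| := by
  unfold sgnm
  split_ifs with h
  · rw [one_mul, abs_of_nonneg h]
  · rw [abs_of_neg (not_le.1 h), neg_one_mul]

theorem sgnm_mul_abs (y : ℝ) : sgnm y * |y| = y := by
  unfold sgnm
  split_ifs with h
  · rw [one_mul, abs_of_nonneg h]
  · rw [abs_of_neg (not_le.1 h), neg_one_mul, neg_neg]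

theorem sgnm_max_min {a b : ℝ} (ha : a < 0) (hb : 0 ≤ b) (y : ℝ) :
    sgnm (max a (min b y)) = sgnm y := by
  have : 0 ≤ max a (min b y) ↔ 0 ≤ y := by simp [ha.not_ge, hb]
  simp only [sgnm, this]

namespace EpiOpModel

variable {n : ℕ} (M : EpiOpModel n)

abbrev State (n : ℕ) : Type := (Fin n → ℝ) × (Fin n → ℝ)

def stateSpace (n : ℕ) : Set (State n) :=
  Icc 0 1 ×ˢ Icc (-(1 / 2)) (1 / 2)

theorem mem_stateSpace {p : State n} :
    p ∈ stateSpace n ↔ (∀ i, p.1 i ∈ Icc 0 1) ∧ ∀ i, p.2 i ∈ Icc (-(1 / 2)) (1 / 2) := by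
  simp only [stateSpace, mem_prod, mem_Icc, Pi.le_def, forall_and, Pi.neg_apply,
    Pi.div_apply, Pi.ofNat_apply]

theorem inBox_iff {x o : Fin n → ℝ} : M.InBox x o ↔ (x, o) ∈ stateSpace n := by
  rw [mem_stateSpace]; rfl

theorem isClosed_stateSpace : IsClosed (stateSpace n) :=
  isClosed_Icc.prod isClosed_Icc

theorem norm_le_one_of_mem_stateSpace {p : State n} (hp : p ∈ stateSpace n) : ‖p‖ ≤ 1 := by
  rw [mem_stateSpace] at hp
  rw [Prod.norm_def, max_le_iff, pi_norm_le_iff_of_nonneg zero_le_one,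
    pi_norm_le_iff_of_nonneg zero_le_one]
  refine ⟨fun i => ?_, fun i => ?_⟩ <;> rw [Real.norm_eq_abs, abs_le]
  · exact ⟨by linarith [(hp.1 i).1], (hp.1 i).2⟩
  · constructor <;> linarith [(hp.2 i).1, (hp.2 i).2]

def clampState (p : State n) : State n :=
  (max 0 (min 1 p.1), max (-(1 / 2)) (min (1 / 2) p.2))

theorem clampState_mem (p : State n) : clampState p ∈ stateSpace n :=
  ⟨max_min_mem_Icc zero_le_one _, max_min_mem_Icc (fun _ => by norm_num) _⟩

theorem dist_clampState_le {q : State n} (hq : q ∈ stateSpace n)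
    (p : State n) : dist p (clampState p) ≤ dist p q :=
  max_le_max (dist_max_min_le hq.1 p.1) (dist_max_min_le hq.2 p.2)

theorem B_nonneg (i j : Fin n) : 0 ≤ M.B i j := by
  rcases M.Atil_01 i j with h | h
  · rw [M.B_off i j h]
  · exact M.βmin_pos.le.trans (M.B_edge i j h)

theorem Bmin_nonneg (i j : Fin n) : 0 ≤ M.Bmin i j := by
  rw [Bmin, Matrix.smul_apply, smul_eq_mul]
  rcases M.Atil_01 i j with h | h <;> rw [h]
  · rw [mul_zero]
  · rw [mul_one]; exact M.βmin_pos.le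

theorem Bmat_nonneg {o : Fin n → ℝ} {i : Fin n} (ho : o i ∈ Icc (-(1 / 2)) (1 / 2)) (j : Fin n) :
    0 ≤ M.Bmat o i j := by
  have hB := M.B_nonneg i j
  have hBmin := M.Bmin_nonneg i j
  simp only [Bmat, of_apply]
  nlinarith [ho.1, ho.2]

theorem healing_nonneg {o : Fin n → ℝ} {i : Fin n} (ho : o i ∈ Icc (-(1 / 2)) (1 / 2)) :
    0 ≤ M.δmin + (M.δ i - M.δmin) * (o i + 1 / 2) :=
  add_nonneg M.δmin_pos.le (mul_nonneg (sub_nonneg.2 (M.δ_ge i)) (by linarith [ho.1]))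

theorem fx_apply (x o : Fin n → ℝ) (i : Fin n) :
    M.fx x o i = -((M.δmin + (M.δ i - M.δmin) * (o i + 1 / 2)) * x i) +
      (1 - x i) * ∑ j, M.Bmat o i j * x j := by
  simp only [fx, Dmat, Pi.add_apply, Pi.neg_apply, mulVec_diagonal]
  rfl

theorem Lsgn_mulVec_self_apply (o : Fin n → ℝ) (i : Fin n) :
    (M.Lsgn o *ᵥ o) i = (∑ j, M.Au i j) * o i - sgnm (o i) * ∑ j, M.Au i j * |o j| := by
  have hgauge : gaugeMat o *ᵥ o = fun j => |o j| := by
    ext j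
    rw [gaugeMat, mulVec_diagonal, sgnm_mul_eq_abs]
  rw [Lsgn, ← mulVec_mulVec, ← mulVec_mulVec, hgauge, gaugeMat, mulVec_diagonal, Lu, lapOf,
    sub_mulVec, Pi.sub_apply, mulVec_diagonal, mul_sub, ← mul_assoc, mul_comm (sgnm (o i)),
    mul_assoc, sgnm_mul_abs]
  rfl

theorem fo_apply (x o : Fin n → ℝ) (i : Fin n) :
    M.fo x o i =
      x i - (∑ j, M.Au i j) * o i + sgnm (o i) * ∑ j, M.Au i j * |o j| - o i - 1 / 2 := by
  simp only [fo, add_mulVec, one_mulVec, Pi.sub_apply, Pi.add_apply, Lsgn_mulVec_self_apply]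
  ring

theorem sum_Au_mul_abs_le {o : Fin n → ℝ} (ho : ∀ j, o j ∈ Icc (-(1 / 2)) (1 / 2)) (i : Fin n) :
    ∑ j, M.Au i j * |o j| ≤ (∑ j, M.Au i j) * (1 / 2) := by
  rw [Finset.sum_mul]
  exact Finset.sum_le_sum fun j _ =>
    mul_le_mul_of_nonneg_left (abs_le.2 (ho j)) (M.Au_nonneg i j)

theorem fx_nonneg_of_eq_zero {x o : Fin n → ℝ} (hx : ∀ j, x j ∈ Icc 0 1)
    (ho : ∀ j, o j ∈ Icc (-(1 / 2)) (1 / 2)) {i : Fin n} (hi : x i = 0) : 0 ≤ M.fx x o i := by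
  rw [fx_apply, hi, mul_zero, neg_zero, zero_add, sub_zero, one_mul]
  exact Finset.sum_nonneg fun j _ => mul_nonneg (M.Bmat_nonneg (ho i) j) (hx j).1

theorem fx_nonpos_of_eq_one {x o : Fin n → ℝ} (ho : ∀ j, o j ∈ Icc (-(1 / 2)) (1 / 2))
    {i : Fin n} (hi : x i = 1) : M.fx x o i ≤ 0 := by
  rw [fx_apply, hi, sub_self, zero_mul, add_zero, mul_one, neg_nonpos]
  exact M.healing_nonneg (ho i)

theorem fo_nonneg_of_eq_neg_half {x o : Fin n → ℝ} (hx : ∀ j, x j ∈ Icc 0 1)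
    (ho : ∀ j, o j ∈ Icc (-(1 / 2)) (1 / 2)) {i : Fin n} (hi : o i = -(1 / 2)) :
    0 ≤ M.fo x o i := by
  have hsgn : sgnm (o i) = -1 := by rw [hi, sgnm, if_neg (by norm_num)]
  rw [fo_apply, hsgn, hi]
  linarith [M.sum_Au_mul_abs_le ho i, (hx i).1]

theorem fo_nonpos_of_eq_half {x o : Fin n → ℝ} (hx : ∀ j, x j ∈ Icc 0 1)
    (ho : ∀ j, o j ∈ Icc (-(1 / 2)) (1 / 2)) {i : Fin n} (hi : o i = 1 / 2) :
    M.fo x o i ≤ 0 := by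
  have hsgn : sgnm (o i) = 1 := by rw [hi, sgnm, if_pos (by norm_num)]
  rw [fo_apply, hsgn, hi]
  linarith [M.sum_Au_mul_abs_le ho i, (hx i).2, Finset.sum_nonneg fun j (_ : j ∈ Finset.univ) =>
    mul_nonneg (M.Au_nonneg i j) (abs_nonneg (o j))]

def field (p : State n) : State n :=
  (M.fx p.1 p.2, M.fo p.1 p.2)

theorem eventually_add_smul_field_mem {p : State n} (hp : p ∈ stateSpace n) :
    ∀ᶠ h in 𝓝[>] (0 : ℝ), p + h • M.field p ∈ stateSpace n := by
  have hp' := mem_stateSpace.1 hp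
  exact (eventually_add_smul_mem_Icc hp.1 (fun i => M.fx_nonneg_of_eq_zero hp'.1 hp'.2)
    (fun i => M.fx_nonpos_of_eq_one hp'.2)).and
    (eventually_add_smul_mem_Icc hp.2 (fun i => M.fo_nonneg_of_eq_neg_half hp'.1 hp'.2)
      (fun i => M.fo_nonpos_of_eq_half hp'.1 hp'.2))

-- `M.field p = M.fieldOfSign (sgnm ∘ p.2) p`: freezing the gauge `Φ(o)` to `diagonal σ` makes
-- the field polynomial in `(σ, p)`.
def fieldOfSign (σ : Fin n → ℝ) (p : State n) : State n :=
  (M.fx p.1 p.2, p.1 - (diagonal σ * M.Lu * diagonal σ + 1) *ᵥ p.2 - fun _ => 1 / 2)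

theorem contDiff_fieldOfSign :
    ContDiff ℝ 1 fun q : (Fin n → ℝ) × State n => M.fieldOfSign q.1 q.2 := by
  refine ContDiff.prodMk (contDiff_pi.2 fun i => ?_) (contDiff_pi.2 fun i => ?_)
  · simp only [fx_apply, Bmat, of_apply]
    fun_prop
  · simp only [Pi.sub_apply, add_mulVec, one_mulVec, Pi.add_apply, mulVec, dotProduct,
      mul_diagonal, diagonal_mul]
    fun_prop

theorem exists_lipschitz_field_clampState (R : ℝ) : ∃ L : ℝ, ∀ p : State n, ‖p‖ ≤ R →
    ‖M.field p - M.field (clampState p)‖ ≤ L * dist p (clampState p) := by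
  obtain ⟨K, hK⟩ := (M.contDiff_fieldOfSign.locallyLipschitz.locallyLipschitzOn
    (s := closedBall 0 (max 1 R))).exists_lipschitzOnWith_of_compact (isCompact_closedBall _ _)
  refine ⟨K, fun p hp => ?_⟩
  set σ : Fin n → ℝ := fun i => sgnm (p.2 i)
  have hσ : ‖σ‖ ≤ 1 := (pi_norm_le_iff_of_nonneg zero_le_one).2 fun i => by
    rw [Real.norm_eq_abs]
    rcases sgnm_cases (p.2 i) with h | h <;> simp [σ, h]
  have hmem : ∀ r : State n, ‖r‖ ≤ max 1 R → (σ, r) ∈ closedBall 0 (max 1 R) := fun r hr =>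
    mem_closedBall_zero_iff.2 (max_le (hσ.trans (le_max_left _ _)) hr)
  have hsgn : ∀ y : ℝ, sgnm (max (-(1 / 2)) (min (1 / 2) y)) = sgnm y :=
    sgnm_max_min (by norm_num) (by norm_num)
  have hclamp : M.field (clampState p) = M.fieldOfSign σ (clampState p) := by
    simp only [field, fieldOfSign, fo, Lsgn, gaugeMat, clampState, σ, Pi.sup_apply, Pi.inf_apply,
      Pi.neg_apply, Pi.div_apply, Pi.ofNat_apply, hsgn]
  calc ‖M.field p - M.field (clampState p)‖
        = dist (M.fieldOfSign σ p) (M.fieldOfSign σ (clampState p)) := by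
        rw [hclamp, dist_eq_norm]; rfl
    _ ≤ K * dist (σ, p) (σ, clampState p) := by
      simpa only using hK.dist_le_mul _ (hmem p (hp.trans (le_max_right _ _))) _
        (hmem _ ((norm_le_one_of_mem_stateSpace (clampState_mem p)).trans (le_max_left _ _)))
    _ = K * dist p (clampState p) := by rw [Prod.dist_eq, dist_self, max_eq_right dist_nonneg]

theorem IsTrajectory.hasDerivAt {M : EpiOpModel n} {x o : ℝ → Fin n → ℝ}
    (h : M.IsTrajectory x o) (t : ℝ) :
    HasDerivAt (fun s => (x s, o s)) (M.field (x t, o t)) t :=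
  (hasDerivAt_pi.2 fun i => (h t i).1).prodMk (hasDerivAt_pi.2 fun i => (h t i).2)

end EpiOpModel

open EpiOpModel

/-- Lemma 5, positive invariance of the state space:
if at some time `t` one has `x_i(t) ∈ [0,1]` and `o_i(t) ∈ [−0.5, 0.5]` for all
`i`, then `x_i(t+τ) ∈ [0,1]` and `o_i(t+τ) ∈ [−0.5, 0.5]` for all `i` and all
`τ ≥ 0`. -/
theorem positive_invariance {n : ℕ} (M : EpiOpModel n) (x o : ℝ → Fin n → ℝ)
    (htraj : M.IsTrajectory x o) (t : ℝ) (hbox : M.InBox (x t) (o t)) :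
    ∀ τ : ℝ, 0 ≤ τ → M.InBox (x (t + τ)) (o (t + τ)) := by
  intro τ hτ
  have hcont : Continuous fun s => (x s, o s) :=
    continuous_iff_continuousAt.2 fun s => (htraj.hasDerivAt s).continuousAt
  obtain ⟨R, hR⟩ :=
    isCompact_Icc.exists_bound_of_continuousOn (hcont.continuousOn (s := Icc t (t + τ)))
  obtain ⟨L, hL⟩ := M.exists_lipschitz_field_clampState R
  have hmem := isClosed_stateSpace.mem_of_hasDerivWithinAt_of_tangent hcont.continuousOn
    (fun s _ => (htraj.hasDerivAt s).hasDerivWithinAt)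
    (fun p hp => M.eventually_add_smul_field_mem hp)
    (fun s hs => ⟨clampState (x s, o s), clampState_mem _, fun q hq => dist_clampState_le hq _,
      hL _ (hR s (Ico_subset_Icc_self hs))⟩)
    (M.inBox_iff.1 hbox)
  exact M.inBox_iff.2 (hmem (t + τ) ⟨le_add_of_nonneg_right hτ, le_rfl⟩)
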